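/- arXiv:1602.03078 — 2 statements merged into one kernel-verified Lean document; each statement's English description precedes it below -/
import Mathlib

section
/- Let Ω ⊆ ℝ^d be a bounded open set such that: (1) if x ∈ Ω and |y_j| ≤ |x_j| for all j then y ∈ Ω; (2) Ω is invariant under permutations of coordinates; (3) t·cl(Ω) ⊆ Ω for all 0 < t < 1; and assume V(Ω) := {η ∈ ℝ^d : ηΩ ⊆ Ω} equals Q := {x : max_j |x_j| ≤ 1}. Then V_*(Ω^c) := {η ∈ ℝ_*^d : η Ω^c ⊆ Ω^c} equals W₁ := {x ∈ ℝ^d : min_j |x_j| ≥ 1}. -/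
/-- For a bounded open `Ω` which is solid, permutation invariant and starlike
(`t·cl(Ω) ⊆ Ω` for `0 < t < 1`), with `V(Ω) = Q` (the closed `ℓ_∞` unit ball),
one has `V_*(Ω^c) = W₁ = {x : |x_j| ≥ 1 ∀ j}`. -/
theorem stmt9 (d : ℕ) (Ω : Set (Fin d → ℝ)) (hopen : IsOpen Ω)
    (hbdd : Bornology.IsBounded Ω)
    (h1 : ∀ x ∈ Ω, ∀ y : Fin d → ℝ, (∀ j, |y j| ≤ |x j|) → y ∈ Ω)
    (h2 : ∀ σ : Equiv.Perm (Fin d), ∀ x ∈ Ω, (x ∘ σ) ∈ Ω)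
    (h3 : ∀ t : ℝ, 0 < t → t < 1 → ∀ x ∈ closure Ω, t • x ∈ Ω)
    (hV : {η : Fin d → ℝ | ∀ x ∈ Ω, η * x ∈ Ω} = {x : Fin d → ℝ | ∀ j, |x j| ≤ 1}) :
    {η : Fin d → ℝ | (∀ j, η j ≠ 0) ∧ ∀ x ∈ Ωᶜ, η * x ∈ Ωᶜ} =
      {x : Fin d → ℝ | ∀ j, 1 ≤ |x j|} := by
  ext η
  simp only [Set.mem_setOf_eq]
  constructor
  · rintro ⟨hne, hmap⟩ j
    have key : (fun j => (η j)⁻¹) ∈ {η : Fin d → ℝ | ∀ x ∈ Ω, η * x ∈ Ω} := by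
      intro x hx
      by_contra hc
      have hcancel : η * ((fun j => (η j)⁻¹) * x) = x := by
        funext k
        simp only [Pi.mul_apply]
        field_simp
        exact mul_div_cancel_left₀ _ (hne k)
      have := hmap _ hc
      rw [hcancel] at this
      exact this hx
    rw [hV] at key
    have hj := key j
    simp only [abs_inv] at hj
    have h0 : 0 < |η j| := abs_pos.mpr (hne j)
    rw [inv_le_one_iff₀] at hj
    rcases hj with h | h
    · exact absurd h (not_le.mpr h0)
    · exact h
  · intro h
    refine ⟨fun j hj => by have := h j; rw [hj] at this; simp at this; linarith, ?_⟩
    intro x hx hmem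
    apply hx
    refine h1 _ hmem x fun j => ?_
    rw [Pi.mul_apply, abs_mul]
    exact le_mul_of_one_le_left (abs_nonneg _) (h j)
end

section
/- Let Ω ⊆ ℝ^d and let S ⊆ ℝ_*^d. Suppose that for every compact K ⊆ Ω there exists a compact L ⊆ Ω with S ⊆ V_*(L^c, K^c) := {η ∈ ℝ_*^d : η·(ℝ^d∖L) ⊆ ℝ^d∖K}. Then for every compact K ⊆ Ω the set (1/S)·K is contained in Ω, where 1/S is the set of coordinatewise reciprocals of S. Conversely, if Ω is open and for every compact K ⊆ Ω the closure of (1/S)·K is a compact subset of Ω, then for every compact K ⊆ Ω there is a compact L ⊆ Ω with S ⊆ V_*(L^c, K^c). -/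
/-- `V_*(M,N) = {η ∈ ℝ_*^d : ηM ⊆ N}`. -/
def Vstar (d : ℕ) (M N : Set (Fin d → ℝ)) : Set (Fin d → ℝ) :=
  {η | (∀ j, η j ≠ 0) ∧ ∀ x ∈ M, η * x ∈ N}

/-- If for every compact `K ⊆ Ω` there is a compact `L ⊆ Ω` with `S ⊆ V_*(L^c,K^c)`,
then `(1/S)·K ⊆ Ω` for all compact `K ⊆ Ω`. Conversely, if `Ω` is open and the closure
of `(1/S)·K` is a compact subset of `Ω` for every compact `K ⊆ Ω`, then for every such
`K` there is a compact `L ⊆ Ω` with `S ⊆ V_*(L^c,K^c)`. -/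
theorem stmt16 (d : ℕ) (Ω S : Set (Fin d → ℝ)) (hS : S ⊆ {x | ∀ j, x j ≠ 0}) :
    ((∀ K : Set (Fin d → ℝ), IsCompact K → K ⊆ Ω →
        ∃ L : Set (Fin d → ℝ), IsCompact L ∧ L ⊆ Ω ∧ S ⊆ Vstar d Lᶜ Kᶜ) →
      ∀ K : Set (Fin d → ℝ), IsCompact K → K ⊆ Ω →
        Set.image2 (· * ·) ((fun x => x⁻¹) '' S) K ⊆ Ω) ∧
    (IsOpen Ω →
      (∀ K : Set (Fin d → ℝ), IsCompact K → K ⊆ Ω →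
        IsCompact (closure (Set.image2 (· * ·) ((fun x => x⁻¹) '' S) K)) ∧
        closure (Set.image2 (· * ·) ((fun x => x⁻¹) '' S) K) ⊆ Ω) →
      ∀ K : Set (Fin d → ℝ), IsCompact K → K ⊆ Ω →
        ∃ L : Set (Fin d → ℝ), IsCompact L ∧ L ⊆ Ω ∧ S ⊆ Vstar d Lᶜ Kᶜ) := by
  constructor
  · intro h K hK hKΩ
    obtain ⟨L, hLc, hLΩ, hSV⟩ := h K hK hKΩ
    rintro z ⟨_, ⟨η, hη, rfl⟩, k, hk, rfl⟩
    obtain ⟨hη0, hV⟩ := hSV hη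
    apply hLΩ
    by_contra hmem
    have := hV _ hmem
    have heq : η * (η⁻¹ * k) = k := by
      funext j
      simp only [Pi.mul_apply, Pi.inv_apply]; rw [← mul_assoc, mul_inv_cancel₀ (hη0 j), one_mul]
    rw [heq] at this
    exact this hk
  · intro _ h K hK hKΩ
    obtain ⟨hc, hsub⟩ := h K hK hKΩ
    refine ⟨closure (Set.image2 (· * ·) ((fun x => x⁻¹) '' S) K), hc, hsub, ?_⟩
    intro η hη
    refine ⟨hS hη, fun x hx hxK => ?_⟩
    apply hx
    apply subset_closure
    have : η⁻¹ * (η * x) = x := by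
      funext j
      simp [← mul_assoc, inv_mul_cancel₀ (hS hη j)]
    exact this ▸ Set.mem_image2_of_mem (Set.mem_image_of_mem _ hη) hxK
end
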